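/- Suppose Assumption (A) holds, r(n−1) < (3/7)(1 − 1/α), and r(n−1) ≤ 1/10. Then for every sign vector s ∈ {−1,+1}^{n−1}, the first component of f(Q^(s)) is positive, i.e. f(Q^(s))₁ = C₁ P^(s)₂/(C₁ − P^(s)₁) + 1 > 0. -/

import Mathlib

/-!
Coordinates are numbered from 1 here and from 0 in the code.

Since `Q^(s)₁ = 0`, the map `f` acts on `Q^(s)` by its left piece, so
`f(Q^(s))₁ = Q^(s)₂ + 1 = q P₂ + 1` with `q = C₁ / (C₁ - P₁)`. This is positive as soon as
`C₁ > 0`, `P₁ < 0` and `|P₂| < 1`.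

Assumption (A) enters only through the characteristic polynomial `χ(x) = xⁿ + Σᵢ aᵢ x^(n-i)`
of the companion-type matrices. Since `χ_L(α) = 0`, `u` is a left eigenvector of `A_L`, so `E`
is the hyperplane `Σᵢ α^(1-i) xᵢ = 1/(1-α)` and `C₁ = α / ((α-1) D)` with
`D = Σᵢ α^(1-i) aᵢᴿ`. As `χ_R(α) = α^(n-1) (α + D)` and `|χ_R(α)| ≥ (α+β)(α-r)^(n-1)`,
Bernoulli's inequality gives `D > 0`. On `E`, `P₁` is `1/(1-α)` minus a weighted sum of the
other coordinates, which the binomial theorem bounds by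
`(2α/(α-1))((1+r/α)^(n-1) - 1) < 1/(α-1)`; hence `P₁ < 0`. Finally
`|P₂| = (2α/(α-1))(n-1)r < 6/7`.
-/

open Matrix Polynomial Finset

noncomputable section

/-- The companion-type matrix of the `n`-dimensional border-collision normal form:
`(i,1)` entry is `-a i`, `(i,i+1)` entries are `1`, all other entries `0`. -/
def bcMat (n : ℕ) (a : Fin n → ℝ) : Matrix (Fin n) (Fin n) ℝ :=
  Matrix.of fun i j =>
    (if (j : ℕ) = 0 then -a i else 0) + (if (j : ℕ) = (i : ℕ) + 1 then 1 else 0)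

/-- The vector `b = (1,0,…,0)`. -/
def bcVec (n : ℕ) : Fin n → ℝ := fun i => if (i : ℕ) = 0 then 1 else 0

/-- `ρ` is an eigenvalue of `M` (of algebraic multiplicity one, automatic when `|ρ| > r`)
and all remaining eigenvalues of `M` over `ℂ`, counted with multiplicity,
have modulus at most `r`. -/
def specA (n : ℕ) (M : Matrix (Fin n) (Fin n) ℝ) (ρ r : ℝ) : Prop :=
  ∃ lam : Fin (n - 1) → ℂ,
    (∀ j, ‖lam j‖ ≤ r) ∧
      M.charpoly.map (algebraMap ℝ ℂ) =
        (X - C (ρ : ℂ)) * ∏ j : Fin (n - 1), (X - C (lam j))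

/-- Assumption (A). -/
def assumptionA (n : ℕ) (aL aR : Fin n → ℝ) (α β r : ℝ) : Prop :=
  1 < α ∧ 1 < β ∧ 0 < r ∧ r < 1 ∧
    specA n (bcMat n aL) α r ∧ specA n (bcMat n aR) (-β) r

/-- The border-collision normal form map `f`. -/
def bcf (n : ℕ) (aL aR : Fin n → ℝ) (x : Fin n → ℝ) : Fin n → ℝ :=
  if ∀ i : Fin n, (i : ℕ) = 0 → x i ≤ 0 then (bcMat n aL).mulVec x + bcVec n
  else (bcMat n aR).mulVec x + bcVec n

/-- The fixed point `Y = (I − A_L)⁻¹ b`. -/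
def Ypt (n : ℕ) (aL : Fin n → ℝ) : Fin n → ℝ :=
  ((1 - bcMat n aL)⁻¹).mulVec (bcVec n)

/-- The row vector `u = (α^{n-1}, …, α, 1)`. -/
def uvec (n : ℕ) (α : ℝ) : Fin n → ℝ := fun i => α ^ (n - 1 - (i : ℕ))

/-- The hyperplane `E = {x : uᵀ(x − Y) = 0}`. -/
def Eset (n : ℕ) (aL : Fin n → ℝ) (α : ℝ) : Set (Fin n → ℝ) :=
  {x | ∑ i : Fin n, uvec n α i * (x i - Ypt n aL i) = 0}

/-- The slab `H = {x : |x_i| ≤ M_i r^{i-1}, i = 2,…,n}` with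
`M_i = (2α/(α−1))·binom(n−1,i−1)`. -/
def Hset (n : ℕ) (α r : ℝ) : Set (Fin n → ℝ) :=
  {x | ∀ i : Fin n, 1 ≤ (i : ℕ) →
    |x i| ≤ 2 * α / (α - 1) * ((n - 1).choose (i : ℕ) : ℝ) * r ^ (i : ℕ)}

/-- The first component `C₁` of the point `C`. -/
def Cfirst (n : ℕ) (aL aR : Fin n → ℝ) (α : ℝ) : ℝ :=
  (1 - 1 / (1 - bcMat n aL).det +
      1 / (1 - bcMat n aL).det *
        ∑ k ∈ univ.filter (fun k : Fin n => 1 ≤ (k : ℕ)),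
          α ^ (-((k : ℕ) : ℤ)) *
            ∑ j ∈ univ.filter (fun j : Fin n => (k : ℕ) ≤ (j : ℕ)), aL j) /
    ∑ i : Fin n, α ^ (-((i : ℕ) : ℤ)) * aR i

/-- The point `C = (C₁, 0, …, 0)`. -/
def Cpt (n : ℕ) (aL aR : Fin n → ℝ) (α : ℝ) : Fin n → ℝ :=
  fun i => if (i : ℕ) = 0 then Cfirst n aL aR α else 0

/-- The polytope `Ω = Conv({C} ∪ (E ∩ H))`. -/
def OmegaSet (n : ℕ) (aL aR : Fin n → ℝ) (α r : ℝ) : Set (Fin n → ℝ) :=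
  convexHull ℝ ({Cpt n aL aR α} ∪ (Eset n aL α ∩ Hset n α r))

/-- The cone `Ψ` of scalar multiples of vectors `(1, m₁, …, m_{n-1})` with
`|m_i| ≤ N_i r^{i-1}`, `N_i = ((min(α,β)−1)/2)·binom(n−1,i−1)`. -/
def PsiSet (n : ℕ) (α β r : ℝ) : Set (Fin n → ℝ) :=
  {x | ∃ γ : ℝ, ∃ v : Fin n → ℝ,
    (∀ i : Fin n, (i : ℕ) = 0 → v i = 1) ∧
    (∀ i : Fin n, 1 ≤ (i : ℕ) →
      |v i| ≤ (min α β - 1) / 2 * ((n - 1).choose ((i : ℕ) - 1) : ℝ) * r ^ ((i : ℕ) - 1)) ∧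
    x = γ • v}

/-- `P` is the vertex `P^(s)`: the point of `E` whose `i`-th component, `i = 2,…,n`,
is `s_{i-1}·M_i r^{i-1}`. -/
def isVertexP (n : ℕ) (aL : Fin n → ℝ) (α r : ℝ) (s : Fin (n - 1) → ℝ)
    (P : Fin n → ℝ) : Prop :=
  P ∈ Eset n aL α ∧
    ∀ i : Fin n, ∀ _h : 1 ≤ (i : ℕ),
      P i = s ⟨(i : ℕ) - 1, by have := i.isLt; omega⟩ *
        (2 * α / (α - 1) * ((n - 1).choose (i : ℕ) : ℝ) * r ^ (i : ℕ))

/-- The `k`-th elementary symmetric polynomial of `η`. -/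
def esym {m : ℕ} (η : Fin m → ℂ) (k : ℕ) : ℂ :=
  ∑ t ∈ powersetCard k univ, ∏ j ∈ t, η j

end

theorem scalar_sub_bcMat_apply {n : ℕ} (x : ℝ) (a : Fin n → ℝ) (i j : Fin n) :
    (scalar (Fin n) x - bcMat n a) i j =
      (if i = j then x else 0) + (if (j : ℕ) = 0 then a i else 0)
        - (if (j : ℕ) = i + 1 then 1 else 0) := by
  simp only [Matrix.sub_apply, scalar_apply, diagonal_apply, bcMat, of_apply]
  split_ifs <;> ring

theorem submatrix_castSucc_scalar_sub_bcMat {n : ℕ} (x : ℝ) (a : Fin (n + 1) → ℝ) :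
    (scalar (Fin (n + 1)) x - bcMat (n + 1) a).submatrix Fin.castSucc Fin.castSucc =
      scalar (Fin n) x - bcMat n (Fin.init a) := by
  ext k l
  simp only [submatrix_apply, scalar_sub_bcMat_apply, Fin.castSucc_inj, Fin.val_castSucc, Fin.init]

theorem det_submatrix_castSucc_succ_scalar_sub_bcMat {n : ℕ} (x : ℝ) (a : Fin (n + 1) → ℝ) :
    ((scalar (Fin (n + 1)) x - bcMat (n + 1) a).submatrix Fin.castSucc Fin.succ).det =
      (-1) ^ n := by
  set B := (scalar (Fin (n + 1)) x - bcMat (n + 1) a).submatrix Fin.castSucc Fin.succ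
  have hB : ∀ k l, B k l = (if (k : ℕ) = l + 1 then x else 0) - (if l = k then 1 else 0) := by
    intro k l
    simp only [B, submatrix_apply, scalar_sub_bcMat_apply, Fin.ext_iff, Fin.val_castSucc,
      Fin.val_succ, Nat.add_right_cancel_iff, add_eq_zero, one_ne_zero, and_false, if_false,
      add_zero]
  have hlower : B.IsLowerTriangular := by
    intro k l hkl
    have : (k : ℕ) < l := hkl
    rw [hB, if_neg (by omega), if_neg (by rw [Fin.ext_iff]; omega)]
    ring
  rw [det_of_isLowerTriangular _ hlower, Finset.prod_congr rfl fun k _ => hB k k]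
  simp

theorem det_scalar_sub_bcMat_succ {n : ℕ} (x : ℝ) (a : Fin (n + 2) → ℝ) :
    (scalar (Fin (n + 2)) x - bcMat (n + 2) a).det =
      x * (scalar (Fin (n + 1)) x - bcMat (n + 1) (Fin.init a)).det + a (Fin.last (n + 1)) := by
  have hsign : ((-1 : ℝ) ^ (n + 1)) * (-1) ^ (n + 1) = 1 := by rw [← mul_pow]; norm_num
  have heven : (-1 : ℝ) ^ (n + 1 + (n + 1)) = 1 := Even.neg_one_pow ⟨n + 1, rfl⟩
  have hzero : ∀ k : Fin n,
      (scalar (Fin (n + 2)) x - bcMat (n + 2) a) (Fin.last (n + 1)) k.succ.castSucc = 0 := by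
    intro k
    rw [scalar_sub_bcMat_apply]
    simp [Fin.ext_iff, k.isLt.ne', show (k : ℕ) ≠ n + 1 by omega]
  rw [det_succ_row _ (Fin.last (n + 1)), Fin.sum_univ_castSucc, Fin.sum_univ_succ]
  simp only [hzero, mul_zero, zero_mul, Finset.sum_const_zero, add_zero, Fin.succAbove_last,
    Fin.castSucc_zero, Fin.succAbove_zero, submatrix_castSucc_scalar_sub_bcMat,
    det_submatrix_castSucc_succ_scalar_sub_bcMat, scalar_sub_bcMat_apply]
  simp only [Fin.val_last, Fin.coe_ofNat_eq_mod, Nat.zero_mod, add_zero, Fin.ext_iff,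
    Nat.add_eq_zero_iff, one_ne_zero, and_false, ↓reduceIte, zero_add, Nat.right_eq_add,
    OfNat.ofNat_ne_zero, sub_zero, heven, Nat.left_eq_add, one_mul]
  linear_combination a (Fin.last (n + 1)) * hsign

theorem det_scalar_sub_bcMat (x : ℝ) : ∀ (n : ℕ) (a : Fin (n + 1) → ℝ),
    (scalar (Fin (n + 1)) x - bcMat (n + 1) a).det =
      x ^ (n + 1) + ∑ i : Fin (n + 1), a i * x ^ (n - i)
  | 0, a => by simp [bcMat]
  | n + 1, a => by
    have hshift : ∀ i : Fin (n + 1), x * (Fin.init a i * x ^ (n - i)) =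
        a i.castSucc * x ^ (n + 1 - i) := fun i => by
      rw [Nat.sub_add_comm (Nat.le_of_lt_succ i.isLt), pow_succ, Fin.init]; ring
    rw [det_scalar_sub_bcMat_succ, det_scalar_sub_bcMat x n,
      Fin.sum_univ_castSucc (fun i : Fin (n + 2) => a i * x ^ (n + 1 - i)), mul_add,
      Finset.mul_sum, Finset.sum_congr rfl fun i _ => hshift i]
    simp only [Fin.val_last, Fin.val_castSucc, Nat.sub_self, pow_zero, mul_one]
    ring

theorem eval_charpoly_bcMat {n : ℕ} (hn : 1 ≤ n) (a : Fin n → ℝ) (x : ℝ) :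
    (bcMat n a).charpoly.eval x = x ^ n + ∑ i : Fin n, a i * x ^ (n - 1 - i) := by
  obtain ⟨m, rfl⟩ := Nat.exists_eq_add_of_le' hn
  rw [eval_charpoly, det_scalar_sub_bcMat]
  simp

theorem eval_charpoly_bcMat_eq_mul_zpow {n : ℕ} (hn : 1 ≤ n) (a : Fin n → ℝ) {x : ℝ}
    (hx : x ≠ 0) :
    (bcMat n a).charpoly.eval x = x ^ (n - 1) * (x + ∑ i : Fin n, x ^ (-(i : ℤ)) * a i) := by
  have hpow : ∀ i : Fin n, x ^ (n - 1 - i) = x ^ (n - 1) * x ^ (-(i : ℤ)) := fun i => by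
    rw [pow_sub₀ x hx (by omega), _root_.zpow_neg, zpow_natCast]
  rw [eval_charpoly_bcMat hn, mul_add, Finset.mul_sum, ← pow_succ, Nat.sub_add_cancel hn]
  simp only [hpow]
  congr 1
  exact Finset.sum_congr rfl fun i _ => by ring

theorem det_one_sub_bcMat (n : ℕ) (a : Fin n → ℝ) :
    (1 - bcMat n a).det = (bcMat n a).charpoly.eval 1 := by
  rw [eval_charpoly, map_one]

theorem Polynomial.Monic.eval_pos_of_forall_ne_zero {p : ℝ[X]} (hp : p.Monic) {a : ℝ}
    (h : ∀ x, a ≤ x → p.eval x ≠ 0) : 0 < p.eval a := by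
  rcases le_or_gt p.degree 0 with hdeg | hdeg
  · simp [hp.degree_le_zero_iff_eq_one.mp hdeg]
  have hlim := p.tendsto_atTop_of_leadingCoeff_nonneg hdeg (hp.leadingCoeff ▸ zero_le_one)
  obtain ⟨b, hab, hb⟩ := ((Filter.eventually_ge_atTop a).and (hlim.eventually_gt_atTop 0)).exists
  by_contra! hneg
  obtain ⟨c, hc, hc0⟩ := intermediate_value_Icc hab p.continuous.continuousOn ⟨hneg, hb.le⟩
  exact h c hc.1 hc0

namespace specA

variable {n : ℕ} {M : Matrix (Fin n) (Fin n) ℝ} {ρ r : ℝ}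

theorem ofReal_eval_charpoly (h : specA n M ρ r) (x : ℝ) :
    ∃ lam : Fin (n - 1) → ℂ, (∀ j, ‖lam j‖ ≤ r) ∧
      ((M.charpoly.eval x : ℝ) : ℂ) = (x - ρ) * ∏ j, ((x : ℂ) - lam j) := by
  obtain ⟨lam, hlam, hfac⟩ := h
  refine ⟨lam, hlam, ?_⟩
  have := congrArg (Polynomial.eval (x : ℂ)) hfac
  rw [Polynomial.eval_map_algebraMap] at this
  simpa [Polynomial.eval_prod] using
    (aeval_algebraMap_apply_eq_algebraMap_eval x M.charpoly).symm.trans this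

theorem eval_charpoly_self (h : specA n M ρ r) : M.charpoly.eval ρ = 0 := by
  obtain ⟨lam, -, hx⟩ := h.ofReal_eval_charpoly ρ
  exact Complex.ofReal_eq_zero.mp (by rw [hx, sub_self, zero_mul])

theorem eval_charpoly_ne_zero (h : specA n M ρ r) {x : ℝ} (hx : r < |x|) (hxρ : x ≠ ρ) :
    M.charpoly.eval x ≠ 0 := by
  obtain ⟨lam, hlam, hx'⟩ := h.ofReal_eval_charpoly x
  have hfactor : ∀ j, (x : ℂ) - lam j ≠ 0 := fun j hj => by
    have := hlam j
    rw [← sub_eq_zero.mp hj, Complex.norm_real, Real.norm_eq_abs] at this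
    linarith
  have hρ : (x : ℂ) - ρ ≠ 0 := by exact_mod_cast sub_ne_zero.mpr hxρ
  exact_mod_cast hx' ▸ mul_ne_zero hρ (Finset.prod_ne_zero_iff.mpr fun j _ => hfactor j)

theorem mul_pow_le_abs_eval_charpoly (h : specA n M ρ r) {x : ℝ} (hx : r ≤ x) :
    |x - ρ| * (x - r) ^ (n - 1) ≤ |M.charpoly.eval x| := by
  obtain ⟨lam, hlam, hx'⟩ := h.ofReal_eval_charpoly x
  have hfactor : ∀ j, x - r ≤ ‖(x : ℂ) - lam j‖ := fun j => by
    have := norm_sub_norm_le (x : ℂ) (lam j)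
    rw [Complex.norm_real, Real.norm_eq_abs] at this
    linarith [le_abs_self x, hlam j]
  have habs := congrArg norm hx'
  rw [Complex.norm_real, Real.norm_eq_abs, norm_mul, norm_prod, ← Complex.ofReal_sub,
    Complex.norm_real, Real.norm_eq_abs] at habs
  rw [habs]
  gcongr
  simpa using Finset.prod_le_prod (s := univ) (fun _ _ => sub_nonneg.mpr hx) fun j _ => hfactor j

theorem mul_pow_le_eval_charpoly (h : specA n M ρ r) {x : ℝ} (hρ : ρ < x) (hr : r < x) :
    (x - ρ) * (x - r) ^ (n - 1) ≤ M.charpoly.eval x := by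
  have hpos : 0 < M.charpoly.eval x := M.charpoly_monic.eval_pos_of_forall_ne_zero
    fun y hy => h.eval_charpoly_ne_zero (by linarith [le_abs_self y]) (by linarith)
  simpa [abs_of_pos (sub_pos.mpr hρ), abs_of_pos hpos] using h.mul_pow_le_abs_eval_charpoly hr.le

end specA

theorem uvec_eq_mul_zpow {n : ℕ} {α : ℝ} (hα : α ≠ 0) (i : Fin n) :
    uvec n α i = α ^ (n - 1) * α ^ (-(i : ℤ)) := by
  rw [uvec, pow_sub₀ α hα (by omega), _root_.zpow_neg, zpow_natCast]

theorem vecMul_uvec_bcMat {n : ℕ} (hn : 1 ≤ n) {a : Fin n → ℝ} {α : ℝ}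
    (hroot : (bcMat n a).charpoly.eval α = 0) : uvec n α ᵥ* bcMat n a = α • uvec n α := by
  rw [eval_charpoly_bcMat hn] at hroot
  ext j
  simp only [vecMul, dotProduct, bcMat, of_apply, mul_add, Finset.sum_add_distrib,
    Pi.smul_apply, smul_eq_mul, uvec]
  by_cases hj : (j : ℕ) = 0
  · have hpow : α * α ^ (n - 1) = α ^ n := by rw [← pow_succ', Nat.sub_add_cancel hn]
    simp only [hj, ↓reduceIte, mul_neg, sum_neg_distrib, Nat.right_eq_add, Nat.add_eq_zero_iff,
      one_ne_zero, and_false, mul_zero, sum_const_zero, add_zero, tsub_zero, hpow]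
    rw [Finset.sum_congr rfl fun i _ => mul_comm _ _]
    linarith
  · obtain ⟨k, hk⟩ : ∃ k : Fin n, (j : ℕ) = k + 1 := ⟨⟨j - 1, by omega⟩, by simp; omega⟩
    have hcond : ∀ i : Fin n, (j : ℕ) = i + 1 ↔ k = i := fun i => by rw [Fin.ext_iff]; omega
    simp only [hj, if_false, mul_zero, Finset.sum_const_zero, zero_add, hcond, mul_ite, mul_one,
      Finset.sum_ite_eq, Finset.mem_univ, if_true]
    rw [← pow_succ']
    congr 1
    omega

theorem dotProduct_uvec_bcVec {n : ℕ} (hn : 1 ≤ n) (α : ℝ) :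
    uvec n α ⬝ᵥ bcVec n = α ^ (n - 1) := by
  rw [dotProduct, Finset.sum_eq_single ⟨0, hn⟩ (fun i _ hi => by
    simp [bcVec, show (i : ℕ) ≠ 0 from fun h => hi (Fin.ext h)]) (by simp)]
  simp [uvec, bcVec]

theorem dotProduct_uvec_Ypt {n : ℕ} (hn : 1 ≤ n) {a : Fin n → ℝ} {α : ℝ}
    (hroot : (bcMat n a).charpoly.eval α = 0) (hΔ : (1 - bcMat n a).det ≠ 0) :
    uvec n α ⬝ᵥ Ypt n a = α ^ (n - 1) / (1 - α) := by
  have hα : 1 - α ≠ 0 := by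
    rw [sub_ne_zero]
    rintro rfl
    exact hΔ (by rwa [det_one_sub_bcMat])
  have hY : (1 - bcMat n a) *ᵥ Ypt n a = bcVec n := by
    rw [Ypt, mulVec_mulVec, mul_nonsing_inv _ (isUnit_iff_ne_zero.mpr hΔ), one_mulVec]
  rw [eq_div_iff hα, ← dotProduct_uvec_bcVec hn α, ← hY, dotProduct_mulVec, vecMul_sub,
    vecMul_one, vecMul_uvec_bcMat hn hroot, sub_dotProduct, smul_dotProduct, smul_eq_mul]
  ring

theorem mem_Eset_iff {n : ℕ} (hn : 1 ≤ n) {a : Fin n → ℝ} {α : ℝ} (hα : α ≠ 0)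
    (hroot : (bcMat n a).charpoly.eval α = 0) (hΔ : (1 - bcMat n a).det ≠ 0) (x : Fin n → ℝ) :
    x ∈ Eset n a α ↔ ∑ i : Fin n, α ^ (-(i : ℤ)) * x i = 1 / (1 - α) := by
  have hsplit : ∑ i : Fin n, uvec n α i * (x i - Ypt n a i) =
      α ^ (n - 1) * ∑ i : Fin n, α ^ (-(i : ℤ)) * x i - uvec n α ⬝ᵥ Ypt n a := by
    simp only [mul_sub, Finset.sum_sub_distrib, dotProduct, uvec_eq_mul_zpow hα, Finset.mul_sum,
      mul_assoc]
  rw [Eset, Set.mem_ofPred_eq, hsplit, dotProduct_uvec_Ypt hn hroot hΔ, sub_eq_zero, ← mul_one_div,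
    mul_right_inj' (pow_ne_zero _ hα)]

theorem sum_Icc_zpow_neg {α : ℝ} (hα : α ≠ 1) (hα0 : α ≠ 0) (j : ℕ) :
    ∑ k ∈ Finset.Icc 1 j, α ^ (-(k : ℤ)) = (1 - α ^ (-(j : ℤ))) / (α - 1) := by
  have hα1 : α - 1 ≠ 0 := sub_ne_zero.mpr hα
  induction j with
  | zero => simp
  | succ j ih =>
    rw [Finset.sum_Icc_succ_top (by omega), ih]
    simp only [_root_.zpow_neg, zpow_natCast, pow_succ]
    field_simp
    ring

theorem sum_zpow_mul_sum_tail {n : ℕ} {α : ℝ} (hα : α ≠ 1) (hα0 : α ≠ 0) (a : Fin n → ℝ) :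
    ∑ k ∈ univ.filter (fun k : Fin n => 1 ≤ (k : ℕ)), α ^ (-((k : ℕ) : ℤ)) *
        ∑ j ∈ univ.filter (fun j : Fin n => (k : ℕ) ≤ (j : ℕ)), a j =
      (∑ j : Fin n, (1 - α ^ (-((j : ℕ) : ℤ))) * a j) / (α - 1) := by
  simp_rw [Finset.mul_sum]
  rw [Finset.sum_div, Finset.sum_comm' (t' := (univ : Finset (Fin n)))
    (s' := fun j => univ.filter fun k : Fin n => 1 ≤ (k : ℕ) ∧ (k : ℕ) ≤ j) (by simp)]
  refine Finset.sum_congr rfl fun j _ => ?_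
  rw [← Finset.sum_mul, mul_div_right_comm, ← sum_Icc_zpow_neg hα hα0 j]
  congr 1
  refine (Finset.sum_map _ Fin.valEmbedding fun k : ℕ => α ^ (-(k : ℤ))).symm.trans ?_
  congr 1
  ext m
  simp only [Finset.mem_map, Finset.mem_filter, Finset.mem_univ, true_and, Fin.valEmbedding_apply,
    Finset.mem_Icc]
  exact ⟨fun ⟨k, hk, hkm⟩ => hkm ▸ hk, fun hm => ⟨⟨m, by omega⟩, hm, rfl⟩⟩

theorem Cfirst_eq {n : ℕ} (hn : 1 ≤ n) {aL : Fin n → ℝ} (aR : Fin n → ℝ) {α : ℝ} (hα : 1 < α)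
    (hroot : (bcMat n aL).charpoly.eval α = 0) (hΔ : (1 - bcMat n aL).det ≠ 0) :
    Cfirst n aL aR α = α / (α - 1) / ∑ i : Fin n, α ^ (-(i : ℤ)) * aR i := by
  have hα0 : α ≠ 0 := by positivity
  have hα1 : α - 1 ≠ 0 := by linarith
  have hsumL : ∑ i : Fin n, α ^ (-(i : ℤ)) * aL i = -α := by
    rw [eval_charpoly_bcMat_eq_mul_zpow hn aL hα0] at hroot
    linarith [(mul_eq_zero.mp hroot).resolve_left (pow_ne_zero _ hα0)]
  have hdet : (1 - bcMat n aL).det = 1 + ∑ i : Fin n, aL i := by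
    simp [det_one_sub_bcMat, eval_charpoly_bcMat_eq_mul_zpow hn aL one_ne_zero]
  have htail : ∑ j : Fin n, (1 - α ^ (-((j : ℕ) : ℤ))) * aL j =
      (1 - bcMat n aL).det - 1 + α := by
    simp only [hdet, sub_mul, one_mul, Finset.sum_sub_distrib, hsumL]
    ring
  rw [Cfirst, sum_zpow_mul_sum_tail hα.ne' hα0, htail]
  congr 1
  field_simp
  ring

theorem one_add_pow_le_one_div_one_sub_mul {y : ℝ} (hy : 0 ≤ y) {m : ℕ} (hmy : m * y < 1) :
    (1 + y) ^ m ≤ 1 / (1 - m * y) :=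
  calc (1 + y) ^ m ≤ Real.exp y ^ m := by
        gcongr
        linarith [Real.add_one_le_exp y]
    _ = Real.exp (m * y) := (Real.exp_nat_mul y m).symm
    _ ≤ 1 / (1 - m * y) := Real.exp_bound_div_one_sub_of_interval (by positivity) hmy

theorem sum_choose_succ_mul_pow_succ (m : ℕ) (y : ℝ) :
    ∑ i : Fin m, (m.choose (i + 1) : ℝ) * y ^ (i + 1 : ℕ) = (1 + y) ^ m - 1 := by
  rw [Fin.sum_univ_eq_sum_range (fun i => (m.choose (i + 1) : ℝ) * y ^ (i + 1)), add_comm 1 y,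
    add_pow, Finset.sum_range_succ']
  simp [mul_comm]

theorem pow_mul_lt_add_mul_sub_pow {α β r : ℝ} {m : ℕ} (hα : 1 < α) (hβ : 1 ≤ β)
    (hrα : r ≤ α) (hmr : r * m ≤ 1 / 10) : α ^ m * α < (α + β) * (α - r) ^ m := by
  have hα0 : 0 < α := by linarith
  have hbern : 1 - m * (r / α) ≤ (1 - r / α) ^ m := by
    have := one_add_mul_le_pow (a := -(r / α)) (by rw [neg_le_neg_iff, div_le_iff₀ hα0]; linarith) m
    simpa [sub_eq_add_neg] using this
  have hsmall : m * (r / α) ≤ 1 / 10 := by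
    rw [← mul_div_assoc, div_le_iff₀ hα0]; nlinarith
  have hsub : (α - r) ^ m = α ^ m * (1 - r / α) ^ m := by
    rw [← mul_pow, mul_sub, mul_one, mul_div_cancel₀ _ hα0.ne']
  have hkey : α < (α + β) * (1 - m * (r / α)) := by
    have : m * (r / α) * α = r * m := by field_simp
    nlinarith
  rw [hsub]
  have hαm : 0 < α ^ m := by positivity
  nlinarith [mul_le_mul_of_nonneg_left hbern (by positivity : (0 : ℝ) ≤ (α + β) * α ^ m)]

theorem sum_zpow_mul_pos_of_specA {n : ℕ} (hn : 1 ≤ n) {a : Fin n → ℝ} {α β r : ℝ}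
    (h : specA n (bcMat n a) (-β) r) (hα : 1 < α) (hβ : 1 ≤ β) (hrα : r < α)
    (hmr : r * ((n : ℝ) - 1) ≤ 1 / 10) : 0 < ∑ i : Fin n, α ^ (-(i : ℤ)) * a i := by
  have hα0 : α ≠ 0 := by positivity
  have hle := h.mul_pow_le_eval_charpoly (by linarith) hrα
  rw [eval_charpoly_bcMat_eq_mul_zpow hn a hα0, sub_neg_eq_add] at hle
  have hlt := pow_mul_lt_add_mul_sub_pow hα hβ hrα.le (m := n - 1)
    (by rwa [Nat.cast_sub hn, Nat.cast_one])
  have hαpos : 0 < α ^ (n - 1) := by positivity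
  nlinarith

theorem mul_one_add_div_pow_sub_one_lt {α r : ℝ} {m : ℕ} (hα : 1 ≤ α) (hr : 0 ≤ r)
    (hmr : r * m ≤ 1 / 10) : 2 * α * ((1 + r / α) ^ m - 1) < 1 := by
  have hα0 : 0 < α := by linarith
  have hz : m * (r / α) ≤ 1 / 10 := by
    rw [← mul_div_assoc, div_le_iff₀ hα0]
    nlinarith
  have hgrowth := one_add_pow_le_one_div_one_sub_mul (div_nonneg hr hα0.le)
    (by linarith : m * (r / α) < 1)
  rw [le_div_iff₀ (by linarith)] at hgrowth
  have hw : (1 + r / α) ^ m ≤ 10 / 9 := by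
    nlinarith [pow_nonneg (by positivity : (0 : ℝ) ≤ 1 + r / α) m]
  have hw' : (1 + r / α) ^ m - 1 ≤ 10 / 9 * (m * (r / α)) := by
    nlinarith [mul_le_mul_of_nonneg_right hw (by positivity : (0 : ℝ) ≤ m * (r / α))]
  calc 2 * α * ((1 + r / α) ^ m - 1) ≤ 2 * α * (10 / 9 * (m * (r / α))) := by gcongr
    _ = 20 / 9 * (r * m) := by field_simp; ring
    _ < 1 := by linarith

theorem isVertexP.abs_sum_succ_le {m : ℕ} {aL : Fin (m + 1) → ℝ} {α r : ℝ}
    {s : Fin (m + 1 - 1) → ℝ} {P : Fin (m + 1) → ℝ} (hP : isVertexP (m + 1) aL α r s P)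
    (hs : ∀ j, |s j| ≤ 1) (hα : 1 < α) (hr : 0 ≤ r) :
    |∑ i : Fin m, α ^ (-((i + 1 : ℕ) : ℤ)) * P i.succ| ≤
      2 * α / (α - 1) * ((1 + r / α) ^ m - 1) := by
  have hα0 : 0 < α := by linarith
  set K := 2 * α / (α - 1)
  have hK : 0 < K := div_pos (by linarith) (by linarith)
  have hterm : ∀ i : Fin m, |α ^ (-((i + 1 : ℕ) : ℤ)) * P i.succ| ≤
      K * ((m.choose (i + 1) : ℝ) * (r / α) ^ (i + 1 : ℕ)) := fun i => by
    have hPi := hP.2 i.succ (by simp)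
    simp only [Fin.val_succ, Nat.add_sub_cancel] at hPi
    have hM : 0 ≤ K * (m.choose ((i : ℕ) + 1)) * r ^ ((i : ℕ) + 1) := by positivity
    rw [hPi, abs_mul, abs_mul, abs_of_pos (zpow_pos hα0 _), abs_of_nonneg hM]
    calc α ^ (-((i + 1 : ℕ) : ℤ)) * (|s _| * (K * (m.choose ((i : ℕ) + 1)) * r ^ ((i : ℕ) + 1)))
        ≤ α ^ (-((i + 1 : ℕ) : ℤ)) * (K * (m.choose ((i : ℕ) + 1)) * r ^ ((i : ℕ) + 1)) :=
          mul_le_mul_of_nonneg_left (mul_le_of_le_one_left hM (hs _)) (zpow_pos hα0 _).le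
      _ = K * ((m.choose (i + 1) : ℝ) * (r / α) ^ (i + 1 : ℕ)) := by
          rw [div_pow, _root_.zpow_neg, zpow_natCast]
          ring
  rw [← sum_choose_succ_mul_pow_succ, Finset.mul_sum]
  exact (Finset.abs_sum_le_sum_abs _ _).trans (Finset.sum_le_sum fun i _ => hterm i)

theorem isVertexP.apply_zero_neg {n : ℕ} (hn : 1 ≤ n) {aL : Fin n → ℝ} {α r : ℝ}
    {s : Fin (n - 1) → ℝ} {P : Fin n → ℝ} (hP : isVertexP n aL α r s P) (hs : ∀ j, |s j| ≤ 1)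
    (hα : 1 < α) (hr : 0 ≤ r) (hmr : r * ((n : ℝ) - 1) ≤ 1 / 10)
    (hroot : (bcMat n aL).charpoly.eval α = 0) (hΔ : (1 - bcMat n aL).det ≠ 0) :
    P ⟨0, hn⟩ < 0 := by
  obtain ⟨m, rfl⟩ := Nat.exists_eq_add_of_le' hn
  have hα1 : 0 < α - 1 := by linarith
  have hE := (mem_Eset_iff hn (by positivity) hroot hΔ P).mp hP.1
  rw [Fin.sum_univ_succ] at hE
  simp only [Fin.val_zero, Nat.cast_zero, neg_zero, zpow_zero, one_mul, Fin.val_succ] at hE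
  have htail : |∑ i : Fin m, α ^ (-((i + 1 : ℕ) : ℤ)) * P i.succ| < 1 / (α - 1) := by
    refine (hP.abs_sum_succ_le hs hα hr).trans_lt ?_
    rw [div_mul_eq_mul_div, div_lt_div_iff_of_pos_right hα1]
    exact mul_one_add_div_pow_sub_one_lt hα.le hr (by simpa using hmr)
  have h1α : 1 / (1 - α) = -(1 / (α - 1)) := by rw [← one_div_neg_eq_neg_one_div, neg_sub]
  show P 0 < 0
  linarith [neg_abs_le (∑ i : Fin m, α ^ (-((i + 1 : ℕ) : ℤ)) * P i.succ)]

theorem isVertexP.abs_apply_one_lt_one {n : ℕ} (hn : 2 ≤ n) {aL : Fin n → ℝ} {α r : ℝ}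
    {s : Fin (n - 1) → ℝ} {P : Fin n → ℝ} (hP : isVertexP n aL α r s P) (hs : ∀ j, |s j| ≤ 1)
    (hα : 1 < α) (hr : 0 ≤ r) (hmr : r * ((n : ℝ) - 1) < 3 / 7 * (1 - 1 / α)) :
    |P ⟨1, hn⟩| < 1 := by
  have hα0 : 0 < α := by linarith
  have hα1 : 0 < α - 1 := by linarith
  have hP1 := hP.2 ⟨1, hn⟩ le_rfl
  simp only [Nat.choose_one_right, pow_one, Nat.cast_sub (by omega : 1 ≤ n), Nat.cast_one] at hP1
  have hn1 : (1 : ℝ) ≤ n := by exact_mod_cast (by omega : 1 ≤ n)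
  have hM : 0 ≤ 2 * α / (α - 1) * (n - 1) * r :=
    mul_nonneg (mul_nonneg (div_nonneg (by linarith) hα1.le) (by linarith)) hr
  rw [hP1, abs_mul, abs_of_nonneg hM]
  have hmr' : 2 * α * (r * (n - 1)) < α - 1 := by
    rw [one_sub_div hα0.ne', ← mul_div_assoc, lt_div_iff₀ hα0] at hmr
    linarith
  calc |s _| * (2 * α / (α - 1) * (n - 1) * r) ≤ 1 * (2 * α / (α - 1) * (n - 1) * r) :=
        mul_le_mul_of_nonneg_right (hs _) hM
    _ = 2 * α * (r * (n - 1)) / (α - 1) := by ring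
    _ < 1 := by rwa [div_lt_one hα1]

theorem bcf_apply_of_nonpos {n : ℕ} (aL aR : Fin n → ℝ) {x : Fin n → ℝ} {i₀ i₁ : Fin n}
    (hi₀ : (i₀ : ℕ) = 0) (hi₁ : (i₁ : ℕ) = 1) (hx : x i₀ ≤ 0) :
    bcf n aL aR x i₀ = x i₁ - aL i₀ * x i₀ + 1 := by
  have h0 : ∀ j : Fin n, (j : ℕ) = 0 ↔ j = i₀ := fun j => by rw [Fin.ext_iff, hi₀]
  have h1 : ∀ j : Fin n, (j : ℕ) = 1 ↔ j = i₁ := fun j => by rw [Fin.ext_iff, hi₁]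
  rw [bcf, if_pos fun i hi => (h0 i).mp hi ▸ hx]
  simp only [bcMat, h0, h1, hi₀, Pi.add_apply, mulVec, dotProduct, of_apply, add_mul, ite_mul,
    neg_mul, zero_mul, one_mul, sum_add_distrib, sum_ite_eq', mem_univ, ↓reduceIte, bcVec]
  ring

/-- Under Assumption (A), `r(n−1) < (3/7)(1 − 1/α)`, and `r(n−1) ≤ 1/10`, for every sign
vector `s` the first component of `f(Q^(s))` equals `C₁P^(s)₂/(C₁ − P^(s)₁) + 1` and is
positive. -/
theorem stmt_12 (n : ℕ) (hn : 2 ≤ n) (aL aR : Fin n → ℝ) (α β r : ℝ)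
    (hA : assumptionA n aL aR α β r)
    (h1 : r * ((n : ℝ) - 1) < 3 / 7 * (1 - 1 / α))
    (h2 : r * ((n : ℝ) - 1) ≤ 1 / 10)
    (s : Fin (n - 1) → ℝ) (hs : ∀ j, s j = 1 ∨ s j = -1)
    (P : Fin n → ℝ) (hP : isVertexP n aL α r s P) :
    bcf n aL aR
        (fun i => if (i : ℕ) = 0 then 0 else
          Cfirst n aL aR α / (Cfirst n aL aR α - P ⟨0, by omega⟩) * P i)
        ⟨0, by omega⟩ =
      Cfirst n aL aR α * P ⟨1, by omega⟩ / (Cfirst n aL aR α - P ⟨0, by omega⟩) + 1 ∧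
    0 < Cfirst n aL aR α * P ⟨1, by omega⟩ / (Cfirst n aL aR α - P ⟨0, by omega⟩) + 1 := by
  obtain ⟨hα, hβ, hr0, hr1, hL, hR⟩ := hA
  have hn1 : 1 ≤ n := by omega
  have hroot := hL.eval_charpoly_self
  have hΔ : (1 - bcMat n aL).det ≠ 0 := by
    rw [det_one_sub_bcMat]
    exact hL.eval_charpoly_ne_zero (by rwa [abs_one]) hα.ne
  have hs' : ∀ j, |s j| ≤ 1 := fun j => by rcases hs j with h | h <;> simp [h]
  have hC : 0 < Cfirst n aL aR α := by
    rw [Cfirst_eq hn1 aR hα hroot hΔ]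
    exact div_pos (div_pos (by linarith) (by linarith))
      (sum_zpow_mul_pos_of_specA hn1 hR hα hβ.le (by linarith) h2)
  have hP₀ := hP.apply_zero_neg hn1 hs' hα hr0.le h2 hroot hΔ
  have hP₁ := abs_lt.mp (hP.abs_apply_one_lt_one hn hs' hα hr0.le h1)
  refine ⟨?_, ?_⟩
  · rw [bcf_apply_of_nonpos aL aR (i₀ := ⟨0, by omega⟩) (i₁ := ⟨1, hn⟩) rfl rfl (by simp)]
    simp only [Nat.one_ne_zero, if_false, if_true]
    ring
  · rw [div_add_one (by linarith)]
    exact div_pos (by nlinarith) (by linarith)
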